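/- Let P, Q be pseudo-differential operators with coefficients in the dual numbers R[ε]/(ε²), with P₊ = 1, and suppose that both ( (P + εQ)(P + εQ)* )₋ = 0 and ( (P + εQ) · h²∂² · (P + εQ)* )₋ = 0 hold. Then the operator L_G := P · h²∂² · P⁻¹ satisfies L_G = (L_G)₊ + ε [ (L_G)₊ , Q P⁻¹ ]₋; in particular (L_G)₋ is a multiple of ε and equals ε [ (L_G)₊ , Q P⁻¹ ]₋. -/

import Mathlib

open scoped BigOperators

/-- Generalized binomial coefficient `C(k,l) = k(k-1)⋯(k-l+1)/l!` for `k : ℤ`. -/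
def gbinom (k : ℤ) (l : ℕ) : ℚ :=
  (∏ i ∈ Finset.range l, ((k : ℚ) - i)) / (Nat.factorial l)

/-- Pseudo-differential operators (and symbols): coefficient functions `ℤ → R`
with support bounded above.  The parameter `d` (the derivation) determines the product. -/
structure PDO (R : Type) [CommRing R] [Algebra ℚ R] (d : R →+ R) where
  coeff : ℤ → R
  bdd : ∃ N : ℤ, ∀ n : ℤ, N < n → coeff n = 0

namespace PDO

variable {R : Type} [CommRing R] [Algebra ℚ R] {d : R →+ R}

theorem ext' {A B : PDO R d} (h : A.coeff = B.coeff) : A = B := by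
  cases A; cases B; cases h; rfl

set_option linter.unusedSectionVars false in
theorem iterD_zero (d : R →+ R) (j : ℕ) : d^[j] (0 : R) = 0 := by
  induction j with
  | zero => rfl
  | succ j ih => rw [Function.iterate_succ_apply', ih, map_zero]

instance : Zero (PDO R d) := ⟨⟨fun _ => 0, ⟨0, fun _ _ => rfl⟩⟩⟩

instance : One (PDO R d) :=
  ⟨⟨fun n => if n = 0 then 1 else 0, ⟨0, fun n hn => if_neg (by omega)⟩⟩⟩

instance : Add (PDO R d) :=
  ⟨fun A B => ⟨fun n => A.coeff n + B.coeff n, by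
    obtain ⟨N, hN⟩ := A.bdd
    obtain ⟨M, hM⟩ := B.bdd
    exact ⟨max N M, fun n hn => by
      show A.coeff n + B.coeff n = 0
      rw [hN n (lt_of_le_of_lt (le_max_left N M) hn),
        hM n (lt_of_le_of_lt (le_max_right N M) hn), add_zero]⟩⟩⟩

instance : Neg (PDO R d) :=
  ⟨fun A => ⟨fun n => -A.coeff n, by
    obtain ⟨N, hN⟩ := A.bdd
    exact ⟨N, fun n hn => by show -A.coeff n = 0; rw [hN n hn, neg_zero]⟩⟩⟩

instance : SMul ℚ (PDO R d) :=
  ⟨fun c A => ⟨fun n => c • A.coeff n, by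
    obtain ⟨N, hN⟩ := A.bdd
    exact ⟨N, fun n hn => by show c • A.coeff n = 0; rw [hN n hn, smul_zero]⟩⟩⟩

instance : AddCommGroup (PDO R d) where
  add := (· + ·)
  zero := 0
  neg := Neg.neg
  add_assoc A B C := ext' (funext fun n => add_assoc (A.coeff n) (B.coeff n) (C.coeff n))
  zero_add A := ext' (funext fun n => zero_add (A.coeff n))
  add_zero A := ext' (funext fun n => add_zero (A.coeff n))
  add_comm A B := ext' (funext fun n => add_comm (A.coeff n) (B.coeff n))
  neg_add_cancel A := ext' (funext fun n => neg_add_cancel (A.coeff n))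
  nsmul := nsmulRec
  zsmul := zsmulRec

/-- The product of pseudo-differential operators, determined by the commutation rule
`∂^k · f = Σ_{l ≥ 0} C(k,l) (∂^l f) ∂^(k-l)`. -/
noncomputable instance : Mul (PDO R d) :=
  ⟨fun A B =>
    ⟨fun n => ∑ᶠ (k : ℤ) (m : ℤ),
        if _ : 0 ≤ k + m - n then
          A.coeff k * (gbinom k (k + m - n).toNat • (d^[(k + m - n).toNat] (B.coeff m)))
        else 0, by
      obtain ⟨N, hN⟩ := A.bdd
      obtain ⟨M, hM⟩ := B.bdd
      refine ⟨N + M, fun n hn => ?_⟩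
      have hz : ∀ k m : ℤ,
          (if _ : 0 ≤ k + m - n then
            A.coeff k * (gbinom k (k + m - n).toNat • (d^[(k + m - n).toNat] (B.coeff m)))
          else 0) = 0 := by
        intro k m
        by_cases hl : 0 ≤ k + m - n
        · rw [dif_pos hl]
          by_cases hk : N < k
          · rw [hN k hk, zero_mul]
          · rw [hM m (by omega), iterD_zero, smul_zero, mul_zero]
        · rw [dif_neg hl]
      simp only [hz, finsum_zero]⟩⟩

noncomputable def npow (A : PDO R d) : ℕ → PDO R d
  | 0 => 1
  | n + 1 => npow A n * A

noncomputable instance : Pow (PDO R d) ℕ := ⟨fun A n => A.npow n⟩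

/-- The monomial `r ∂^k`. -/
def mono (r : R) (k : ℤ) : PDO R d :=
  ⟨fun n => if n = k then r else 0, ⟨k, fun n hn => if_neg (by omega)⟩⟩

/-- The constant (order-zero) operator `r`. -/
def const (r : R) : PDO R d := mono r 0

/-- The operator `∂`. -/
def del : PDO R d := mono (1 : R) 1

/-- The operator `h∂`. -/
def hdel (h : Rˣ) : PDO R d := mono (h : R) 1

/-- The Lax operator `L = h²∂² + 2u`. -/
def Lop (h : Rˣ) (u : R) : PDO R d :=
  ⟨fun n => if n = 2 then (h : R) ^ 2 else if n = 0 then 2 * u else 0,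
   ⟨2, fun n hn => by
      show (if n = 2 then (h : R) ^ 2 else if n = 0 then 2 * u else 0) = 0
      rw [if_neg (by omega), if_neg (by omega)]⟩⟩

/-- The differential part `A₊`. -/
def pos (A : PDO R d) : PDO R d :=
  ⟨fun n => if 0 ≤ n then A.coeff n else 0, by
    obtain ⟨N, hN⟩ := A.bdd
    refine ⟨N, fun n hn => ?_⟩
    show (if 0 ≤ n then A.coeff n else 0) = 0
    by_cases h0 : (0 : ℤ) ≤ n
    · rw [if_pos h0]; exact hN n hn
    · rw [if_neg h0]⟩

/-- The integral part `A₋ = A − A₊`. -/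
def negp (A : PDO R d) : PDO R d :=
  ⟨fun n => if n < 0 then A.coeff n else 0, ⟨0, fun n hn => if_neg (by omega)⟩⟩

/-- The residue `Res_∂ A = a₋₁`. -/
def res (A : PDO R d) : R := A.coeff (-1)

/-- The formal adjoint, determined by `(f ∂^k)* = (−∂)^k · f`. -/
noncomputable def adj (A : PDO R d) : PDO R d :=
  ⟨fun n => ∑ᶠ k : ℤ,
      if _ : 0 ≤ k - n then
        (((-1 : ℚ) ^ k) * gbinom k (k - n).toNat) • (d^[(k - n).toNat] (A.coeff k))
      else 0, by
    obtain ⟨N, hN⟩ := A.bdd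
    refine ⟨N, fun n hn => ?_⟩
    have hz : ∀ k : ℤ, (if _ : 0 ≤ k - n then
        (((-1 : ℚ) ^ k) * gbinom k (k - n).toNat) • (d^[(k - n).toNat] (A.coeff k))
      else 0) = 0 := by
      intro k
      by_cases hl : 0 ≤ k - n
      · rw [dif_pos hl, hN k (by omega), iterD_zero, smul_zero]
      · rw [dif_neg hl]
    simp only [hz, finsum_zero]⟩

/-- The operator `P(h∂) = Σ pₙ hⁿ ∂ⁿ` associated to the symbol `P(λ) = Σ pₙ λⁿ`. -/
noncomputable def ofSymbol (h : Rˣ) (A : PDO R d) : PDO R d :=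
  ⟨fun n => A.coeff n * ((h ^ n : Rˣ) : R), by
    obtain ⟨N, hN⟩ := A.bdd
    exact ⟨N, fun n hn => by show A.coeff n * ((h ^ n : Rˣ) : R) = 0; rw [hN n hn, zero_mul]⟩⟩

/-- Apply `d^[i]` to each coefficient. -/
def mapD (i : ℕ) (A : PDO R d) : PDO R d :=
  ⟨fun n => d^[i] (A.coeff n), by
    obtain ⟨N, hN⟩ := A.bdd
    exact ⟨N, fun n hn => by show d^[i] (A.coeff n) = 0; rw [hN n hn, iterD_zero]⟩⟩

/-- The coefficientwise extension of an additive map `D : R →+ R`. -/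
def mapHom (D : R →+ R) (A : PDO R d) : PDO R d :=
  ⟨fun n => D (A.coeff n), by
    obtain ⟨N, hN⟩ := A.bdd
    exact ⟨N, fun n hn => by show D (A.coeff n) = 0; rw [hN n hn, map_zero]⟩⟩

/-- The commutator `[A, B] = AB − BA`. -/
noncomputable def comm (A B : PDO R d) : PDO R d := A * B - B * A

end PDO

/-- The Leibniz rule: `d` is a derivation. -/
def Leibniz {R : Type} [CommRing R] [Algebra ℚ R] (d : R →+ R) : Prop :=
  ∀ a b : R, d (a * b) = a * d b + b * d a

/-- `aₙ = 1/(2n+1)!!`. -/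
def kdvA (n : ℕ) : ℚ := 1 / (Nat.doubleFactorial (2 * n + 1))

/-- `bₙ = (2n−1)!!` (with `b₀ = (−1)!! = 1`). -/
def kdvB (n : ℕ) : ℚ := (Nat.doubleFactorial (2 * n - 1) : ℕ)

/-- Pseudo-differential operators with coefficients in the dual numbers
`R[ε]/(ε²)`: `⟨A, B⟩` represents `A + εB`. -/
structure EPDO (R : Type) [CommRing R] [Algebra ℚ R] (d : R →+ R) where
  re : PDO R d
  im : PDO R d

namespace EPDO

variable {R : Type} [CommRing R] [Algebra ℚ R] {d : R →+ R}

instance : Add (EPDO R d) := ⟨fun A B => ⟨A.re + B.re, A.im + B.im⟩⟩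
instance : Neg (EPDO R d) := ⟨fun A => ⟨-A.re, -A.im⟩⟩
instance : Sub (EPDO R d) := ⟨fun A B => ⟨A.re - B.re, A.im - B.im⟩⟩
instance : Zero (EPDO R d) := ⟨⟨0, 0⟩⟩
instance : One (EPDO R d) := ⟨⟨1, 0⟩⟩

/-- Multiplication in the dual numbers: `(A + εB)(C + εD) = AC + ε(AD + BC)`. -/
noncomputable instance : Mul (EPDO R d) :=
  ⟨fun A B => ⟨A.re * B.re, A.re * B.im + A.im * B.re⟩⟩

instance : SMul ℚ (EPDO R d) := ⟨fun c A => ⟨c • A.re, c • A.im⟩⟩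

noncomputable def epow (A : EPDO R d) : ℕ → EPDO R d
  | 0 => 1
  | n + 1 => epow A n * A

noncomputable instance : Pow (EPDO R d) ℕ := ⟨fun A n => A.epow n⟩

/-- The inclusion `Ψ(R) → Ψ(R)[ε]`. -/
def lift (A : PDO R d) : EPDO R d := ⟨A, 0⟩

/-- The square-zero formal parameter `ε`. -/
def eps : EPDO R d := ⟨0, 1⟩

/-- The adjoint, extended `ε`-linearly. -/
noncomputable def eadj (A : EPDO R d) : EPDO R d := ⟨PDO.adj A.re, PDO.adj A.im⟩

/-- The differential part, extended `ε`-linearly. -/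
def epos (A : EPDO R d) : EPDO R d := ⟨PDO.pos A.re, PDO.pos A.im⟩

/-- The integral part, extended `ε`-linearly. -/
def enegp (A : EPDO R d) : EPDO R d := ⟨PDO.negp A.re, PDO.negp A.im⟩

/-- The commutator in `Ψ(R)[ε]`. -/
noncomputable def ecomm (A B : EPDO R d) : EPDO R d := A * B - B * A

/-- The residue, with values in the dual numbers `R[ε]` (as a pair). -/
def eres (A : EPDO R d) : R × R := (PDO.res A.re, PDO.res A.im)

end EPDO

/-!
Write `P + εQ = p + εr` with `p = P.re`, `r = P.im + Q.re`. The `ε⁰` part of the first hypothesis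
says `(p p*)₋ = 0`; as `p = 1 + (negative order)`, this forces `p p* = 1`, so the real part of
`P⁻¹` is `p*` and that of `L_G` is `p L p*`, a differential operator by the second hypothesis.
The `ε¹` part of `L_G = P L P⁻¹` is `[P.im p*, p L p*]`, while
`[p L p*, r p*] = p L p* (p r* + r p*) - (p L r* + r L p*)` is differential by the `ε¹` parts of
both hypotheses; subtracting the two gives `(L_G)₋ = ε [(L_G)₊, Q P⁻¹]₋`.

All of this needs `Ψ(R)` to be an associative ring. The coefficient of `∂ⁿ` in a triple product
involves only finitely many coefficients of each factor, which reduces associativity to monomials,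
where it is the iterated Leibniz rule combined with the Chu–Vandermonde identity.
-/

open Finset

lemma descPochhammer_smeval_intCast (k : ℤ) (l : ℕ) :
    (descPochhammer ℤ l).smeval (k : ℚ) = ∏ i ∈ range l, ((k : ℚ) - i) := by
  induction l with
  | zero => simp
  | succ l ih =>
    rw [descPochhammer_succ_right, Polynomial.smeval_mul, ih, prod_range_succ]
    simp [Polynomial.smeval_sub, Polynomial.smeval_X, Polynomial.smeval_natCast]

lemma gbinom_eq_choose (k : ℤ) (l : ℕ) : gbinom k l = Ring.choose (k : ℚ) l := by
  rw [gbinom, Ring.choose_eq_smul, descPochhammer_smeval_intCast, smul_eq_mul, div_eq_inv_mul]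

lemma Ring.choose_intCast_eq_zero {k : ℤ} {l : ℕ} (h0 : 0 ≤ k) (h : k < l) :
    Ring.choose (k : ℚ) l = 0 := by
  lift k to ℕ using h0
  rw [Int.cast_natCast, Ring.choose_natCast, Nat.choose_eq_zero_of_lt (by omega), Nat.cast_zero]

lemma Ring.choose_sum_mul_choose (a b : ℚ) {D i : ℕ} (hi : i ≤ D) :
    ∑ l ∈ range (D + 1), Ring.choose a l * Ring.choose b (D - l) * (l.choose i : ℚ)
      = Ring.choose a i * Ring.choose (a + b - i) (D - i) := by
  obtain ⟨E, rfl⟩ := Nat.exists_eq_add_of_le hi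
  rw [show i + E + 1 = i + (E + 1) by omega, sum_range_add, sum_eq_zero fun l hl => by
    rw [Nat.choose_eq_zero_of_lt (mem_range.mp hl), Nat.cast_zero, mul_zero], zero_add,
    show a + b - i = (a - i) + b by ring, Ring.add_choose_eq _ (Commute.all _ _),
    Nat.sum_antidiagonal_eq_sum_range_succ (fun s t => Ring.choose (a - i) s * Ring.choose b t),
    mul_sum, Nat.add_sub_cancel_left]
  refine sum_congr rfl fun s hs => ?_
  have key := Ring.choose_smul_choose a (Nat.le_add_right i s)
  rw [nsmul_eq_mul, Nat.add_sub_cancel_left] at key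
  rw [show i + E - (i + s) = E - s by omega, mul_right_comm, mul_comm (Ring.choose a (i + s)), key,
    mul_assoc]

namespace Leibniz

variable {R : Type} [CommRing R] [Algebra ℚ R] {d : R →+ R}

lemma map_one (hd : Leibniz d) : d 1 = 0 := by
  simpa using hd 1 1

lemma iterate_map_one (hd : Leibniz d) {l : ℕ} (hl : 0 < l) : d^[l] 1 = 0 := by
  obtain ⟨l, rfl⟩ := Nat.exists_eq_add_of_lt hl
  rw [Function.iterate_succ_apply, Nat.zero_add, hd.map_one, iterate_map_zero]

lemma iterate_map_mul (hd : Leibniz d) (l : ℕ) (a b : R) :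
    d^[l] (a * b) = ∑ i ∈ range (l + 1), l.choose i • (d^[i] a * d^[l - i] b) := by
  induction l with
  | zero => simp
  | succ l ih =>
    rw [sum_choose_succ_nsmul (fun i j => d^[i] a * d^[j] b), ← sum_add_distrib,
      Function.iterate_succ_apply', ih, map_sum]
    refine sum_congr rfl fun i hi => ?_
    rw [map_nsmul, hd, Nat.sub_add_comm (Nat.lt_succ_iff.mp (mem_range.mp hi)),
      Function.iterate_succ_apply', Function.iterate_succ_apply', ← smul_add]
    ring_nf

end Leibniz

lemma iterate_map_rat_smul {M : Type*} [AddCommGroup M] [Module ℚ M] (f : M →+ M) (l : ℕ)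
    (q : ℚ) (x : M) : f^[l] (q • x) = q • f^[l] x := by
  induction l with
  | zero => rfl
  | succ l ih => rw [Function.iterate_succ_apply', Function.iterate_succ_apply', ih, map_rat_smul]

namespace PDO

variable {R : Type} [CommRing R] [Algebra ℚ R] {d : R →+ R}

@[simp] lemma coeff_zero (n : ℤ) : (0 : PDO R d).coeff n = 0 := rfl

lemma coeff_one (n : ℤ) : (1 : PDO R d).coeff n = if n = 0 then 1 else 0 := rfl

@[simp] lemma coeff_add (A B : PDO R d) (n : ℤ) : (A + B).coeff n = A.coeff n + B.coeff n := rfl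

@[simp] lemma coeff_sub (A B : PDO R d) (n : ℤ) : (A - B).coeff n = A.coeff n - B.coeff n := by
  rw [sub_eq_add_neg, sub_eq_add_neg]
  rfl

lemma coeff_mono (r : R) (k n : ℤ) : (mono r k : PDO R d).coeff n = if n = k then r else 0 := rfl

lemma one_eq_mono : (1 : PDO R d) = mono 1 0 := rfl

def OrderLE (A : PDO R d) (N : ℤ) : Prop := ∀ n, N < n → A.coeff n = 0

lemma exists_orderLE (A : PDO R d) : ∃ N, OrderLE A N := A.bdd

lemma OrderLE.mono {A : PDO R d} {N M : ℤ} (hA : OrderLE A N) (h : N ≤ M) : OrderLE A M :=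
  fun n hn => hA n (h.trans_lt hn)

lemma OrderLE.le_of_coeff_ne_zero {A : PDO R d} {N k : ℤ} (hA : OrderLE A N)
    (hk : A.coeff k ≠ 0) : k ≤ N :=
  not_lt.mp (mt (hA k) hk)

lemma OrderLE.add {A B : PDO R d} {N : ℤ} (hA : OrderLE A N) (hB : OrderLE B N) :
    OrderLE (A + B) N := fun n hn => by simp [hA n hn, hB n hn]

lemma orderLE_mono (r : R) (k : ℤ) : OrderLE (mono r k : PDO R d) k :=
  fun _ hn => if_neg hn.ne'

lemma orderLE_one : OrderLE (1 : PDO R d) 0 := orderLE_mono 1 0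

def mulTerm (A B : PDO R d) (n k m : ℤ) : R :=
  if _ : 0 ≤ k + m - n then
    A.coeff k * (gbinom k (k + m - n).toNat • (d^[(k + m - n).toNat] (B.coeff m)))
  else 0

lemma coeff_mul (A B : PDO R d) (n : ℤ) :
    (A * B).coeff n = ∑ᶠ (k : ℤ) (m : ℤ), mulTerm A B n k m := rfl

lemma mulTerm_of_lt {A B : PDO R d} {n k m : ℤ} (h : k + m < n) : mulTerm A B n k m = 0 :=
  dif_neg (by omega)

lemma mulTerm_natCast (A B : PDO R d) (n k : ℤ) (l : ℕ) :
    mulTerm A B n k (n - k + l) =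
      A.coeff k * (Ring.choose (k : ℚ) l • d^[l] (B.coeff (n - k + l))) := by
  rw [mulTerm, dif_pos (by omega), show k + (n - k + l) - n = l by ring, Int.toNat_natCast,
    gbinom_eq_choose]

lemma coeff_mul_eq_sum {A B : PDO R d} {NA NB : ℤ} (hA : OrderLE A NA) (hB : OrderLE B NB)
    {n : ℤ} {s : Finset ℤ} {N : ℕ} (hs : ∀ k, n - NB ≤ k → A.coeff k ≠ 0 → k ∈ s)
    (hN : NA + NB - n ≤ N) :
    (A * B).coeff n = ∑ k ∈ s, ∑ l ∈ range (N + 1),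
      A.coeff k * (Ring.choose (k : ℚ) l • d^[l] (B.coeff (n - k + l))) := by
  have inner : ∀ k, ∑ᶠ m, mulTerm A B n k m = ∑ l ∈ range (N + 1),
      A.coeff k * (Ring.choose (k : ℚ) l • d^[l] (B.coeff (n - k + l))) := by
    intro k
    by_cases hk : A.coeff k = 0
    · simp [mulTerm, hk]
    have shift_inj : Function.Injective fun l : ℕ => n - k + l := fun _ _ h => by
      simpa using h
    rw [finsum_eq_sum_of_support_subset _ (s := (range (N + 1)).map ⟨_, shift_inj⟩), sum_map]
    · exact sum_congr rfl fun l _ => mulTerm_natCast A B n k l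
    intro m hm
    have hkm : n ≤ k + m := not_lt.mp (mt mulTerm_of_lt hm)
    have hmB : m ≤ NB := by
      by_contra hlt
      simp [mulTerm, hB m (not_le.mp hlt)] at hm
    have := hA.le_of_coeff_ne_zero hk
    simp only [coe_map, Function.Embedding.coeFn_mk, coe_range, Set.mem_image, Set.mem_Iio]
    exact ⟨(k + m - n).toNat, by omega, by omega⟩
  rw [coeff_mul, finsum_congr inner, finsum_eq_sum_of_support_subset]
  intro k hk
  obtain ⟨l, -, hl⟩ := exists_ne_zero_of_sum_ne_zero hk
  refine hs k ?_ (left_ne_zero_of_mul hl)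
  by_contra hlt
  simp [hB (n - k + l) (by omega)] at hl

lemma OrderLE.mul {A B : PDO R d} {NA NB : ℤ} (hA : OrderLE A NA) (hB : OrderLE B NB) :
    OrderLE (A * B) (NA + NB) := fun n hn => by
  rw [coeff_mul_eq_sum hA hB (s := ∅) (N := 0)
    (fun _ hk hk0 => absurd (hA.le_of_coeff_ne_zero hk0) (by omega)) (by omega), sum_empty]

lemma coeff_mul_eq_sum_Icc {A B : PDO R d} {NA NB : ℤ} (hA : OrderLE A NA) (hB : OrderLE B NB)
    (n : ℤ) :
    (A * B).coeff n = ∑ k ∈ Icc (n - NB) NA, ∑ l ∈ range ((NA + NB - n).toNat + 1),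
      A.coeff k * (Ring.choose (k : ℚ) l • d^[l] (B.coeff (n - k + l))) :=
  coeff_mul_eq_sum hA hB (fun _ hk hk0 => mem_Icc.mpr ⟨hk, hA.le_of_coeff_ne_zero hk0⟩)
    (Int.self_le_toNat _)

protected lemma mul_add (A B C : PDO R d) : A * (B + C) = A * B + A * C := by
  obtain ⟨NA, hA⟩ := exists_orderLE A
  obtain ⟨NB, hB⟩ := exists_orderLE B
  obtain ⟨NC, hC⟩ := exists_orderLE C
  have hB' : OrderLE B (max NB NC) := OrderLE.mono hB (le_max_left _ _)
  have hC' : OrderLE C (max NB NC) := OrderLE.mono hC (le_max_right _ _)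
  refine ext' (funext fun n => ?_)
  simp only [coeff_add, coeff_mul_eq_sum_Icc hA (hB'.add hC'), coeff_mul_eq_sum_Icc hA hB',
    coeff_mul_eq_sum_Icc hA hC', iterate_map_add, smul_add, mul_add, sum_add_distrib]

protected lemma add_mul (A B C : PDO R d) : (A + B) * C = A * C + B * C := by
  obtain ⟨NA, hA⟩ := exists_orderLE A
  obtain ⟨NB, hB⟩ := exists_orderLE B
  obtain ⟨NC, hC⟩ := exists_orderLE C
  have hA' : OrderLE A (max NA NB) := OrderLE.mono hA (le_max_left _ _)
  have hB' : OrderLE B (max NA NB) := OrderLE.mono hB (le_max_right _ _)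
  refine ext' (funext fun n => ?_)
  simp only [coeff_add, coeff_mul_eq_sum_Icc (hA'.add hB') hC, coeff_mul_eq_sum_Icc hA' hC,
    coeff_mul_eq_sum_Icc hB' hC, add_mul, sum_add_distrib]

noncomputable instance : NonUnitalNonAssocRing (PDO R d) where
  left_distrib := PDO.mul_add
  right_distrib := PDO.add_mul
  zero_mul A := by simpa using PDO.add_mul 0 0 A
  mul_zero A := by simpa using PDO.mul_add A 0 0

lemma coeff_mono_mul {B : PDO R d} {NB : ℤ} (hB : OrderLE B NB) (f : R) (a n : ℤ) {N : ℕ}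
    (hN : a + NB - n ≤ N) :
    (mono f a * B).coeff n = ∑ l ∈ range (N + 1),
      f * (Ring.choose (a : ℚ) l • d^[l] (B.coeff (n - a + l))) := by
  rw [coeff_mul_eq_sum (orderLE_mono f a) hB (s := {a})
    (fun k _ hk => mem_singleton.mpr (by_contra fun h => hk (if_neg h))) hN, sum_singleton]
  simp only [coeff_mono, if_pos]

lemma coeff_mul_mono {A : PDO R d} {NA : ℤ} (hA : OrderLE A NA) (g : R) (b n : ℤ) {N : ℕ}
    (hN : NA + b - n ≤ N) :
    (A * mono g b).coeff n = ∑ l ∈ range (N + 1),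
      A.coeff (n - b + l) * (Ring.choose ((n - b + l : ℤ) : ℚ) l • d^[l] g) := by
  rw [coeff_mul_eq_sum hA (orderLE_mono g b) (s := Icc (n - b) NA)
    (fun _ hk hk0 => mem_Icc.mpr ⟨hk, hA.le_of_coeff_ne_zero hk0⟩) hN, sum_comm]
  refine sum_congr rfl fun l _ => ?_
  rw [sum_eq_single (n - b + l)]
  · simp [coeff_mono, show n - (n - b + l) + l = b by ring]
  · intro k _ hk
    simp [coeff_mono, show n - k + l ≠ b by omega]
  · intro hk
    simp [hA _ (lt_of_not_ge fun h => hk (mem_Icc.mpr ⟨by omega, h⟩))]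

lemma coeff_mono_mul_mono (f g : R) (a b : ℤ) (i : ℕ) :
    (mono f a * mono g b : PDO R d).coeff (a + b - i) = f * (Ring.choose (a : ℚ) i • d^[i] g) := by
  rw [coeff_mono_mul (orderLE_mono g b) f a _ (N := i) (by omega), sum_eq_single_of_mem i
    (self_mem_range_succ i) fun l _ hl => by simp [coeff_mono, show a + b - i - a + l ≠ b by omega]]
  simp [coeff_mono, show a + b - i - a + i = b by ring]

protected lemma one_mul (B : PDO R d) : 1 * B = B := by
  obtain ⟨NB, hB⟩ := exists_orderLE B
  refine ext' (funext fun n => ?_)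
  rw [one_eq_mono, coeff_mono_mul hB 1 0 n (Int.self_le_toNat _), sum_eq_single_of_mem 0
    (mem_range.mpr (Nat.succ_pos _)) fun l _ hl => by simp [Ring.choose_zero_ite, hl]]
  simp

lemma mul_one_of_leibniz (hd : Leibniz d) (A : PDO R d) : A * 1 = A := by
  obtain ⟨NA, hA⟩ := exists_orderLE A
  refine ext' (funext fun n => ?_)
  rw [one_eq_mono, coeff_mul_mono hA 1 0 n (Int.self_le_toNat _), sum_eq_single_of_mem 0
    (mem_range.mpr (Nat.succ_pos _)) fun l _ hl => by
      simp [hd.iterate_map_one (Nat.pos_of_ne_zero hl)]]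
  simp

lemma coeff_mono_mul_mono_mul_mono (f g h : R) (a b c : ℤ) (D : ℕ) :
    (mono f a * mono g b * mono h c : PDO R d).coeff (a + b + c - D) =
      ∑ i ∈ range (D + 1), (Ring.choose (a : ℚ) i * Ring.choose ((a : ℚ) + b - i) (D - i)) •
        (f * d^[i] g * d^[D - i] h) := by
  rw [coeff_mul_mono ((orderLE_mono f a).mul (orderLE_mono g b)) h c _ (N := D) (by omega),
    ← sum_range_reflect]
  refine sum_congr rfl fun i hi => ?_
  have hi : i ≤ D := Nat.lt_succ_iff.mp (mem_range.mp hi)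
  rw [Nat.add_sub_cancel, show a + b + c - D - c + ((D - i : ℕ) : ℤ) = a + b - i by omega,
    coeff_mono_mul_mono]
  push_cast
  simp only [Algebra.smul_def, map_mul]
  ring

lemma coeff_mono_mul_mono_mul_mono' (hd : Leibniz d) (f g h : R) (a b c : ℤ) (D : ℕ) :
    (mono f a * (mono g b * mono h c) : PDO R d).coeff (a + b + c - D) =
      ∑ i ∈ range (D + 1), (Ring.choose (a : ℚ) i * Ring.choose ((a : ℚ) + b - i) (D - i)) •
        (f * d^[i] g * d^[D - i] h) := by
  rw [coeff_mono_mul ((orderLE_mono g b).mul (orderLE_mono h c)) f a _ (N := D) (by omega)]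
  have expand : ∀ l ∈ range (D + 1),
      f * (Ring.choose (a : ℚ) l •
        d^[l] ((mono g b * mono h c : PDO R d).coeff (a + b + c - D - a + l))) =
        ∑ i ∈ range (D + 1), (Ring.choose (a : ℚ) l * Ring.choose (b : ℚ) (D - l) * l.choose i) •
          (f * d^[i] g * d^[D - i] h) := by
    intro l hl
    have hl : l ≤ D := Nat.lt_succ_iff.mp (mem_range.mp hl)
    have leibniz : ∀ i ∈ range (l + 1), l.choose i • (d^[i] g * d^[l - i] (d^[D - l] h)) =
        l.choose i • (d^[i] g * d^[D - i] h) := fun i hi => by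
      rw [← Function.iterate_add_apply,
        show l - i + (D - l) = D - i by have := mem_range.mp hi; omega]
    rw [show a + b + c - D - a + l = b + c - ((D - l : ℕ) : ℤ) by omega, coeff_mono_mul_mono,
      mul_smul_comm _ g, iterate_map_rat_smul, hd.iterate_map_mul, sum_congr rfl leibniz,
      sum_subset (range_subset_range.mpr (Nat.succ_le_succ hl)) fun i _ hi => by
        rw [Nat.choose_eq_zero_of_lt (by simpa using hi), zero_smul],
      smul_sum, smul_sum, mul_sum]
    refine sum_congr rfl fun i _ => ?_
    simp only [nsmul_eq_mul]
    simp only [Algebra.smul_def, map_mul, map_natCast]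
    ring
  rw [sum_congr rfl expand, sum_comm]
  refine sum_congr rfl fun i hi => ?_
  rw [← sum_smul, Ring.choose_sum_mul_choose _ _ (Nat.lt_succ_iff.mp (mem_range.mp hi))]

lemma mono_mul_assoc (hd : Leibniz d) (f g h : R) (a b c : ℤ) :
    mono f a * mono g b * mono h c = (mono f a * (mono g b * mono h c) : PDO R d) := by
  refine ext' (funext fun n => ?_)
  rcases lt_or_ge (a + b + c) n with hn | hn
  · rw [((orderLE_mono f a).mul (orderLE_mono g b)).mul (orderLE_mono h c) n hn,
      (orderLE_mono f a).mul ((orderLE_mono g b).mul (orderLE_mono h c)) n (by omega)]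
  · obtain ⟨D, rfl⟩ : ∃ D : ℕ, n = a + b + c - D := ⟨(a + b + c - n).toNat, by omega⟩
    rw [coeff_mono_mul_mono_mul_mono, coeff_mono_mul_mono_mul_mono' hd]

lemma coeff_sum {ι : Type*} (s : Finset ι) (F : ι → PDO R d) (n : ℤ) :
    (∑ i ∈ s, F i).coeff n = ∑ i ∈ s, (F i).coeff n :=
  map_sum (AddMonoidHom.mk' (fun A : PDO R d => A.coeff n) fun _ _ => rfl) F s

noncomputable def truncate (A : PDO R d) (M N : ℤ) : PDO R d :=
  ∑ k ∈ Icc M N, mono (A.coeff k) k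

lemma coeff_truncate (A : PDO R d) (M N j : ℤ) :
    (truncate A M N).coeff j = if j ∈ Icc M N then A.coeff j else 0 := by
  simp only [truncate, coeff_sum, coeff_mono, sum_ite_eq]

lemma orderLE_truncate (A : PDO R d) (M N : ℤ) : OrderLE (truncate A M N) N := fun j hj => by
  rw [coeff_truncate, if_neg fun h => by simp at h; omega]

lemma coeff_truncate_of_le {A : PDO R d} {N : ℤ} (hA : OrderLE A N) {M j : ℤ} (hj : M ≤ j) :
    (truncate A M N).coeff j = A.coeff j := by
  rw [coeff_truncate]
  split_ifs with h
  · rfl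
  · exact (hA j (by simp at h; omega)).symm

lemma coeff_mul_congr_left {A A' B : PDO R d} {NB : ℤ} (hB : OrderLE B NB) {n : ℤ}
    (h : ∀ k, n - NB ≤ k → A.coeff k = A'.coeff k) : (A * B).coeff n = (A' * B).coeff n := by
  obtain ⟨NA, hA⟩ := exists_orderLE A
  obtain ⟨NA', hA'⟩ := exists_orderLE A'
  rw [coeff_mul_eq_sum_Icc (OrderLE.mono hA (le_max_left NA NA')) hB,
    coeff_mul_eq_sum_Icc (OrderLE.mono hA' (le_max_right NA NA')) hB]
  exact sum_congr rfl fun k hk => by rw [h k (mem_Icc.mp hk).1]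

lemma coeff_mul_congr_right {A B B' : PDO R d} {NA : ℤ} (hA : OrderLE A NA) {n : ℤ}
    (h : ∀ m, n - NA ≤ m → B.coeff m = B'.coeff m) : (A * B).coeff n = (A * B').coeff n := by
  obtain ⟨NB, hB⟩ := exists_orderLE B
  obtain ⟨NB', hB'⟩ := exists_orderLE B'
  rw [coeff_mul_eq_sum_Icc hA (OrderLE.mono hB (le_max_left NB NB')),
    coeff_mul_eq_sum_Icc hA (OrderLE.mono hB' (le_max_right NB NB'))]
  refine sum_congr rfl fun k hk => sum_congr rfl fun l _ => ?_
  rw [h _ (by have := (mem_Icc.mp hk).2; omega)]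

lemma mul_assoc_of_leibniz (hd : Leibniz d) (A B C : PDO R d) : A * B * C = A * (B * C) := by
  obtain ⟨NA, hA⟩ := exists_orderLE A
  obtain ⟨NB, hB⟩ := exists_orderLE B
  obtain ⟨NC, hC⟩ := exists_orderLE C
  refine ext' (funext fun n => ?_)
  set A' := truncate A (n - NB - NC) NA
  set B' := truncate B (n - NA - NC) NB
  set C' := truncate C (n - NA - NB) NC
  have hA' : OrderLE A' NA := orderLE_truncate _ _ _
  have hB' : OrderLE B' NB := orderLE_truncate _ _ _
  have hC' : OrderLE C' NC := orderLE_truncate _ _ _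
  have hAB : ∀ k, n - NC ≤ k → (A * B).coeff k = (A' * B').coeff k := fun k hk => by
    rw [coeff_mul_congr_left (A' := A') hB fun j hj => (coeff_truncate_of_le hA (by omega)).symm,
      coeff_mul_congr_right (B' := B') hA' fun j hj => (coeff_truncate_of_le hB (by omega)).symm]
  have hBC : ∀ m, n - NA ≤ m → (B * C).coeff m = (B' * C').coeff m := fun m hm => by
    rw [coeff_mul_congr_left (A' := B') hC fun j hj => (coeff_truncate_of_le hB (by omega)).symm,
      coeff_mul_congr_right (B' := C') hB' fun j hj => (coeff_truncate_of_le hC (by omega)).symm]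
  have finite : A' * B' * C' = A' * (B' * C') := by
    simp only [A', B', C', truncate, sum_mul, mul_sum, mono_mul_assoc hd]
  calc (A * B * C).coeff n
      = (A * B * C').coeff n :=
        coeff_mul_congr_right (hA.mul hB) fun j hj => (coeff_truncate_of_le hC (by omega)).symm
    _ = (A' * B' * C').coeff n := coeff_mul_congr_left hC' hAB
    _ = (A' * (B' * C')).coeff n := by rw [finite]
    _ = (A' * (B * C)).coeff n := (coeff_mul_congr_right hA' hBC).symm
    _ = (A * (B * C)).coeff n :=
        coeff_mul_congr_left (hB.mul hC) fun k hk => coeff_truncate_of_le hA (by omega)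

/-- Not an instance: associativity and `A * 1 = A` need the Leibniz rule, which is a hypothesis
rather than a class. -/
@[reducible] noncomputable def ring (hd : Leibniz d) : Ring (PDO R d) where
  mul_assoc := mul_assoc_of_leibniz hd
  one_mul := PDO.one_mul
  mul_one := mul_one_of_leibniz hd
  npow n A := A ^ n
  npow_zero _ := rfl
  npow_succ _ _ := rfl

lemma coeff_pos (A : PDO R d) (n : ℤ) : (pos A).coeff n = if 0 ≤ n then A.coeff n else 0 := rfl

lemma coeff_negp (A : PDO R d) (n : ℤ) : (negp A).coeff n = if n < 0 then A.coeff n else 0 := rfl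

lemma pos_add_negp (A : PDO R d) : pos A + negp A = A :=
  ext' (funext fun n => by
    by_cases h : n < 0 <;> simp [coeff_pos, coeff_negp, h, not_le.mpr, le_of_not_gt])

lemma pos_add (A B : PDO R d) : pos (A + B) = pos A + pos B :=
  ext' (funext fun n => by simp only [coeff_add, coeff_pos]; split_ifs <;> simp)

lemma negp_sub (A B : PDO R d) : negp (A - B) = negp A - negp B :=
  ext' (funext fun n => by simp only [coeff_sub, coeff_negp]; split_ifs <;> simp)

lemma pos_one : pos (1 : PDO R d) = 1 :=
  ext' (funext fun n => by simp only [coeff_pos, coeff_one]; split_ifs <;> simp_all)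

lemma negp_eq_zero_iff {A : PDO R d} : negp A = 0 ↔ ∀ n < 0, A.coeff n = 0 := by
  refine ⟨fun h n hn => by simpa [coeff_negp, hn] using congrArg (coeff · n) h,
    fun h => ext' (funext fun n => ?_)⟩
  simp only [coeff_negp, coeff_zero]
  split_ifs with hn
  exacts [h n hn, rfl]

lemma pos_eq_self_of_negp_eq_zero {A : PDO R d} (h : negp A = 0) : pos A = A := by
  simpa [h] using pos_add_negp A

lemma pos_eq_zero_of_orderLE {A : PDO R d} (hA : OrderLE A (-1)) : pos A = 0 :=
  ext' (funext fun n => by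
    simp only [coeff_pos, coeff_zero]
    split_ifs with h
    exacts [hA n (by omega), rfl])

lemma orderLE_negp (A : PDO R d) : OrderLE (negp A) (-1) := fun n hn => if_neg (by omega)

/-- Differential operators are closed under products since `C(k, l) = 0` for `0 ≤ k < l`. -/
lemma negp_mul_eq_zero {A B : PDO R d} (hA : negp A = 0) (hB : negp B = 0) :
    negp (A * B) = 0 := by
  obtain ⟨NA, hNA⟩ := exists_orderLE A
  obtain ⟨NB, hNB⟩ := exists_orderLE B
  rw [negp_eq_zero_iff] at hA hB ⊢
  intro n hn
  rw [coeff_mul_eq_sum_Icc hNA hNB]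
  refine sum_eq_zero fun k _ => sum_eq_zero fun l _ => ?_
  rcases lt_or_ge k 0 with hk | hk
  · simp [hA k hk]
  rcases lt_or_ge (n - k + l) 0 with hl | hl
  · simp [hB _ hl]
  · simp [Ring.choose_intCast_eq_zero (l := l) hk (by omega)]

lemma coeff_adj_eq_sum {A : PDO R d} {N : ℤ} (hA : OrderLE A N) (n : ℤ) :
    (adj A).coeff n = ∑ k ∈ Icc n N,
      ((-1 : ℚ) ^ k * gbinom k (k - n).toNat) • d^[(k - n).toNat] (A.coeff k) := by
  refine (finsum_eq_sum_of_support_subset _ fun k hk => ?_).trans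
    (sum_congr rfl fun k hk => dif_pos (by have := (mem_Icc.mp hk).1; omega))
  simp only [Function.mem_support, ne_eq, dite_eq_right_iff, not_forall] at hk
  obtain ⟨hkn, hk⟩ := hk
  refine mem_Icc.mpr ⟨by omega, not_lt.mp fun hNk => hk ?_⟩
  rw [hA k hNk, iterate_map_zero, smul_zero]

lemma OrderLE.adj {A : PDO R d} {N : ℤ} (hA : OrderLE A N) : OrderLE (adj A) N := fun n hn => by
  rw [coeff_adj_eq_sum hA, Icc_eq_empty_of_lt hn, sum_empty]

lemma adj_add (A B : PDO R d) : adj (A + B) = adj A + adj B := by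
  obtain ⟨NA, hA⟩ := exists_orderLE A
  obtain ⟨NB, hB⟩ := exists_orderLE B
  have hA' : OrderLE A (max NA NB) := OrderLE.mono hA (le_max_left _ _)
  have hB' : OrderLE B (max NA NB) := OrderLE.mono hB (le_max_right _ _)
  refine ext' (funext fun n => ?_)
  simp only [coeff_add, coeff_adj_eq_sum (hA'.add hB'), coeff_adj_eq_sum hA',
    coeff_adj_eq_sum hB', iterate_map_add, smul_add, sum_add_distrib]

lemma adj_one : adj (1 : PDO R d) = 1 := by
  refine ext' (funext fun n => ?_)
  rw [coeff_adj_eq_sum orderLE_one]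
  rcases lt_or_ge 0 n with hn | hn
  · rw [Icc_eq_empty_of_lt hn, sum_empty, coeff_one, if_neg hn.ne']
  rw [sum_eq_single_of_mem 0 (mem_Icc.mpr ⟨hn, le_rfl⟩) fun k _ hk => by simp [coeff_one, hk]]
  rcases hn.lt_or_eq with hn | rfl
  · simp [coeff_one, hn.ne, gbinom_eq_choose, Ring.choose_zero_pos ℚ (by omega : 0 < (-n).toNat)]
  · simp [coeff_one, gbinom_eq_choose]

lemma mul_adj_eq_one (hd : Leibniz d) {p : PDO R d} (hp : pos p = 1) (h : negp (p * adj p) = 0) :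
    p * adj p = 1 := by
  let _ := PDO.ring hd
  set m := negp p
  have hm : OrderLE m (-1) := orderLE_negp p
  have hlow : OrderLE (m + adj m + m * adj m) (-1) :=
    (hm.add hm.adj).add ((hm.mul hm.adj).mono (by norm_num))
  have expand : p * adj p = 1 + (m + adj m + m * adj m) := by
    rw [← pos_add_negp p, hp, adj_add, adj_one]
    noncomm_ring
  rw [← pos_add_negp (p * adj p), h, expand, pos_add, pos_one, pos_eq_zero_of_orderLE hlow,
    add_zero, add_zero]

lemma negp_comm_eq_zero (hd : Leibniz d) {p r L : PDO R d} (hp : adj p * p = 1)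
    (hL : negp (p * L * adj p) = 0) (h1 : negp (p * adj r + r * adj p) = 0)
    (h2 : negp (p * L * adj r + r * L * adj p) = 0) :
    negp (comm (p * L * adj p) (r * adj p)) = 0 := by
  let _ := PDO.ring hd
  have left : p * L * adj p * p = p * L := by rw [mul_assoc, hp, mul_one]
  have right : r * adj p * (p * L * adj p) = r * L * adj p := by
    simp only [← mul_assoc]
    rw [mul_assoc r, hp, mul_one]
  have expand : comm (p * L * adj p) (r * adj p) =
      p * L * adj p * (p * adj r + r * adj p) - (p * L * adj r + r * L * adj p) := by
    rw [comm, right, mul_add, ← mul_assoc _ p, left]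
    abel
  rw [expand, negp_sub, negp_mul_eq_zero hL h1, h2, sub_zero]

end PDO

namespace EPDO

variable {R : Type} [CommRing R] [Algebra ℚ R] {d : R →+ R}

lemma ext {A B : EPDO R d} (hre : A.re = B.re) (him : A.im = B.im) : A = B := by
  cases A
  cases B
  congr

@[simp] lemma re_mul (A B : EPDO R d) : (A * B).re = A.re * B.re := rfl
@[simp] lemma im_mul (A B : EPDO R d) : (A * B).im = A.re * B.im + A.im * B.re := rfl
@[simp] lemma re_lift (A : PDO R d) : (lift A).re = A := rfl
@[simp] lemma im_lift (A : PDO R d) : (lift A).im = 0 := rfl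
@[simp] lemma re_eadj (A : EPDO R d) : (eadj A).re = PDO.adj A.re := rfl
@[simp] lemma im_eadj (A : EPDO R d) : (eadj A).im = PDO.adj A.im := rfl

lemma eps_mul (A : EPDO R d) : eps * A = ⟨0, A.re⟩ :=
  ext (zero_mul A.re) (show 0 * A.im + 1 * A.re = A.re by rw [zero_mul, zero_add, PDO.one_mul])

lemma enegp_eq_zero_iff {A : EPDO R d} : enegp A = 0 ↔ PDO.negp A.re = 0 ∧ PDO.negp A.im = 0 :=
  ⟨fun h => ⟨congrArg re h, congrArg im h⟩, fun h => ext h.1 h.2⟩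

lemma im_conj (hd : Leibniz d) {P Pinv : EPDO R d} (hright : P * Pinv = 1) (hleft : Pinv * P = 1)
    (L : PDO R d) :
    (P * lift L * Pinv).im = PDO.comm (P.im * Pinv.re) (P.re * L * Pinv.re) := by
  let _ := PDO.ring hd
  have hre : Pinv.re * P.re = 1 := congrArg re hleft
  have him : P.re * Pinv.im + P.im * Pinv.re = 0 := congrArg im hright
  have hPinv_im : Pinv.im = -(Pinv.re * (P.im * Pinv.re)) := by
    rw [← mul_neg, neg_eq_of_add_eq_zero_left him, ← mul_assoc, hre, one_mul]
  have shift : P.im * Pinv.re * (P.re * L * Pinv.re) = P.im * L * Pinv.re := by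
    simp only [← mul_assoc]
    rw [mul_assoc P.im, hre, mul_one]
  simp only [im_mul, re_mul, re_lift, im_lift, mul_zero, zero_add]
  rw [PDO.comm, shift, hPinv_im]
  noncomm_ring

lemma eq_epos_add_eps_mul_enegp {X Y : EPDO R d} (hre : PDO.negp X.re = 0)
    (him : PDO.negp X.im = PDO.negp Y.re) :
    X = epos X + eps * enegp Y ∧ enegp X = eps * enegp Y := by
  rw [eps_mul]
  refine ⟨ext ?_ ?_, ext hre him⟩
  · show X.re = PDO.pos X.re + 0
    rw [add_zero, PDO.pos_eq_self_of_negp_eq_zero hre]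
  · show X.im = PDO.pos X.im + PDO.negp Y.re
    rw [← him, PDO.pos_add_negp]

end EPDO

open PDO EPDO in
theorem deformed_constraint_on_Lax_general
    (R : Type) [CommRing R] [Algebra ℚ R] (d : R →+ R)
    (hd : Leibniz d) (h : Rˣ)
    (P Q Pinv LG : EPDO R d) (hP : EPDO.epos P = 1)
    (hPinv : P * Pinv = 1 ∧ Pinv * P = 1)
    (h1 : EPDO.enegp ((P + EPDO.eps * Q) * EPDO.eadj (P + EPDO.eps * Q)) = 0)
    (h2 : EPDO.enegp ((P + EPDO.eps * Q) * EPDO.lift (PDO.Lop h 0)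
        * EPDO.eadj (P + EPDO.eps * Q)) = 0)
    (hLG : LG = P * EPDO.lift (PDO.Lop h 0) * Pinv) :
    LG = EPDO.epos LG + EPDO.eps * EPDO.enegp (EPDO.ecomm (EPDO.epos LG) (Q * Pinv)) ∧
    EPDO.enegp LG = EPDO.eps * EPDO.enegp (EPDO.ecomm (EPDO.epos LG) (Q * Pinv)) := by
  let _ := PDO.ring hd
  set L := Lop h 0
  have hX : P + eps * Q = ⟨P.re, P.im + Q.re⟩ := by rw [eps_mul]; exact ext (add_zero _) rfl
  rw [hX] at h1 h2
  obtain ⟨h1re, h1im⟩ := enegp_eq_zero_iff.mp h1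
  obtain ⟨h2re, h2im⟩ := enegp_eq_zero_iff.mp h2
  have hunit : P.re * adj P.re = 1 := mul_adj_eq_one hd (congrArg re hP) h1re
  have hPinv_re : Pinv.re = adj P.re := left_inv_eq_right_inv (congrArg re hPinv.2) hunit
  have hLG_re : LG.re = P.re * L * adj P.re := by rw [hLG, ← hPinv_re]; rfl
  have hL : negp LG.re = 0 := hLG_re ▸ h2re
  have key : negp (comm (P.re * L * adj P.re) ((P.im + Q.re) * adj P.re)) = 0 :=
    negp_comm_eq_zero hd (hPinv_re ▸ congrArg re hPinv.2) h2re h1im (by simpa using h2im)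
  have split : comm (P.im * adj P.re) (P.re * L * adj P.re) =
      comm (P.re * L * adj P.re) (Q.re * adj P.re) -
        comm (P.re * L * adj P.re) ((P.im + Q.re) * adj P.re) := by
    simp only [PDO.comm]
    noncomm_ring
  refine eq_epos_add_eps_mul_enegp hL ?_
  rw [show (ecomm (epos LG) (Q * Pinv)).re = comm (pos LG.re) (Q.re * Pinv.re) from rfl,
    pos_eq_self_of_negp_eq_zero hL, hLG_re, hLG, im_conj hd hPinv.1 hPinv.2, hPinv_re, split,
    negp_sub, key, sub_zero]

/-- If `((P+εQ)(P+εQ)*)₋ = 0` and `((P+εQ)·h²∂²·(P+εQ)*)₋ = 0` with `P₊ = 1` (coefficients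
in the dual numbers), then `L_G := P·h²∂²·P⁻¹` satisfies
`L_G = (L_G)₊ + ε[(L_G)₊, QP⁻¹]₋`; in particular `(L_G)₋ = ε[(L_G)₊, QP⁻¹]₋`. -/
theorem deformed_constraint_on_Lax
    (R : Type) [CommRing R] [Algebra ℚ R] (d : R →+ R)
    (hd : Leibniz d) (h : Rˣ) (hdh : d (h : R) = 0)
    (P Q Pinv LG : EPDO R d) (hP : EPDO.epos P = 1)
    (hPinv : P * Pinv = 1 ∧ Pinv * P = 1)
    (h1 : EPDO.enegp ((P + EPDO.eps * Q) * EPDO.eadj (P + EPDO.eps * Q)) = 0)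
    (h2 : EPDO.enegp ((P + EPDO.eps * Q) * EPDO.lift (PDO.Lop h 0)
        * EPDO.eadj (P + EPDO.eps * Q)) = 0)
    (hLG : LG = P * EPDO.lift (PDO.Lop h 0) * Pinv) :
    LG = EPDO.epos LG + EPDO.eps * EPDO.enegp (EPDO.ecomm (EPDO.epos LG) (Q * Pinv)) ∧
    EPDO.enegp LG = EPDO.eps * EPDO.enegp (EPDO.ecomm (EPDO.epos LG) (Q * Pinv)) :=
  deformed_constraint_on_Lax_general R d hd h P Q Pinv LG hP hPinv h1 h2 hLG
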